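/- arXiv:math/0206075 — 4 statements merged into one kernel-verified Lean document; each statement's English description precedes it below -/
import Mathlib

section
/- Let τ : M̃ → M be a covering map between nonempty, path-connected and locally path-connected topological spaces such that every fiber τ⁻¹(x) is finite with exactly p elements, where p is a positive integer. Fix a point x̃₀ ∈ M̃ and set x₀ = τ(x̃₀). If the fundamental group π₁(M, x₀) is commutative, then π₁(M̃, x̃₀) is commutative, and moreover for every element γ ∈ π₁(M, x₀) the p-th power γᵖ lies in the image of the induced homomorphism τ_* : π₁(M̃, x̃₀) → π₁(M, x₀). -/
open CategoryTheory FundamentalGroupoid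

universe u

/-- The homomorphism `τ_* : π₁(M̃, x̃₀) → π₁(M, τ(x̃₀))` induced by a continuous map `τ`. -/
noncomputable def piOneInducedHom {X Y : Type u} [TopologicalSpace X] [TopologicalSpace Y]
    (f : C(X, Y)) (x : X) :
    FundamentalGroup X x →* FundamentalGroup Y (f x) :=
  Functor.mapEnd ((⟨x⟩ : FundamentalGroupoid (TopCat.of X))) (πₘ (show TopCat.of X ⟶ TopCat.of Y from TopCat.ofHom f))

/-!
Homotopies lift along covering maps, so `τ_*` is injective and `π₁(M̃, x̃₀)` embeds in the abelian
group `π₁(M, x₀)`. Since `M̃` is path-connected, the monodromy action of `π₁(M, x₀)` on the fibre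
`τ⁻¹(x₀)` is transitive, and the stabiliser of `x̃₀` is the image of `τ_*`; hence that image has
index `p`, and in an abelian group the `p`-th power of every element lies in a subgroup of index `p`.
-/

theorem piOneInducedHom_apply {X Y : Type u} [TopologicalSpace X] [TopologicalSpace Y]
    (f : C(X, Y)) (x : X) (γ : FundamentalGroup X x) :
    piOneInducedHom f x γ = Path.Homotopic.Quotient.map γ f :=
  rfl

namespace IsCoveringMap

variable {E X : Type u} [TopologicalSpace E] [TopologicalSpace X] {p : C(E, X)}
  (cov : IsCoveringMap p)
include cov

theorem injective_piOneInducedHom (e : E) : Function.Injective (piOneInducedHom p e) :=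
  cov.injective_path_homotopic_map e e

theorem stabilizer_eq_range_piOneInducedHom (e : E) :
    letI := cov.fundamentalGroupMulAction (p e)
    MulAction.stabilizer (FundamentalGroup X (p e)) (⟨e, rfl⟩ : p ⁻¹' {p e}) =
      (piOneInducedHom p e).range := by
  let := cov.fundamentalGroupMulAction (p e)
  ext γ
  constructor
  · intro hγ
    have hfix : cov.monodromy γ ⟨e, rfl⟩ = ⟨e, rfl⟩ := hγ
    refine ⟨(cov.liftPathQuotient γ ⟨e, rfl⟩).cast rfl congr($hfix.symm.1), ?_⟩
    rw [piOneInducedHom_apply, Path.Homotopic.Quotient.map_cast]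
    exact eq_of_heq <| (Path.Homotopic.Quotient.cast_heq ..).trans <|
      (heq_of_eq (cov.map_liftPathQuotient γ ⟨e, rfl⟩)).trans (Path.Homotopic.Quotient.cast_heq ..)
  · rintro ⟨a, rfl⟩
    exact cov.monodromy_map a

theorem isPretransitive_fundamentalGroupMulAction [PathConnectedSpace E] (x : X) :
    letI := cov.fundamentalGroupMulAction x
    MulAction.IsPretransitive (FundamentalGroup X x) (p ⁻¹' {x}) := by
  let := cov.fundamentalGroupMulAction x
  refine ⟨fun e₁ e₂ => ?_⟩
  let P : Path.Homotopic.Quotient e₁.1 e₂.1 := ⟦PathConnectedSpace.somePath e₁.1 e₂.1⟧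
  exact ⟨(P.map p).cast e₁.2.symm e₂.2.symm, cov.monodromy_eq_of_map_eq P rfl⟩

theorem index_range_piOneInducedHom [PathConnectedSpace E] (e : E) :
    (piOneInducedHom p e).range.index = Nat.card (p ⁻¹' {p e}) := by
  let := cov.fundamentalGroupMulAction (p e)
  have := cov.isPretransitive_fundamentalGroupMulAction (p e)
  rw [← cov.stabilizer_eq_range_piOneInducedHom, MulAction.index_stabilizer_of_transitive]

end IsCoveringMap

theorem covering_abelian_and_pow_mem_range_general
    {M' M : Type u} [TopologicalSpace M'] [TopologicalSpace M]
    [PathConnectedSpace M']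
    (τ : C(M', M)) (hcov : IsCoveringMap τ)
    (p : ℕ) (hfib : ∀ x : M, Nat.card (τ ⁻¹' {x}) = p)
    (x₀' : M')
    (hab : ∀ a b : FundamentalGroup M (τ x₀'), a * b = b * a) :
    (∀ a b : FundamentalGroup M' x₀', a * b = b * a) ∧
      ∀ γ : FundamentalGroup M (τ x₀'), γ ^ p ∈ (piOneInducedHom τ x₀').range := by
  refine ⟨fun a b => hcov.injective_piOneInducedHom x₀' (by rw [map_mul, map_mul, hab]),
    fun γ => ?_⟩
  have : IsMulCommutative (FundamentalGroup M (τ x₀')) := isMulCommutative_iff.mpr hab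
  rw [← hfib (τ x₀'), ← hcov.index_range_piOneInducedHom]
  exact Subgroup.pow_index_mem _ γ

/-- If `τ : M̃ → M` is a degree `p` covering map of nonempty, path-connected, locally
path-connected spaces and `π₁(M, x₀)` is commutative, then `π₁(M̃, x̃₀)` is commutative and the
`p`-th power of any element of `π₁(M, x₀)` lies in the image of `τ_*`. -/
theorem covering_abelian_and_pow_mem_range
    {M' M : Type u} [TopologicalSpace M'] [TopologicalSpace M]
    [Nonempty M'] [Nonempty M]
    [PathConnectedSpace M'] [PathConnectedSpace M]
    [LocallyPathConnectedSpace M'] [LocallyPathConnectedSpace M]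
    (τ : C(M', M)) (hcov : IsCoveringMap τ)
    (p : ℕ) (hp : 0 < p) (hfib : ∀ x : M, Nat.card (τ ⁻¹' {x}) = p)
    (x₀' : M')
    (hab : ∀ a b : FundamentalGroup M (τ x₀'), a * b = b * a) :
    (∀ a b : FundamentalGroup M' x₀', a * b = b * a) ∧
      ∀ γ : FundamentalGroup M (τ x₀'), γ ^ p ∈ (piOneInducedHom τ x₀').range :=
  covering_abelian_and_pow_mem_range_general τ hcov p hfib x₀' hab
end

section
/- Let f : G → G' be an injective homomorphism of abelian (additively written) groups, and let p and q be coprime positive integers. Assume that p·a lies in the image of f for every a ∈ G'. Then the induced homomorphism f_q : G/qG → G'/qG', sending the class of g to the class of f(g), is bijective, i.e., f_q is an isomorphism between G/qG and G'/qG'. Equivalently: (surjectivity) for every a ∈ G' there exist g ∈ G and b ∈ G' with a = f(g) + q·b, and (injectivity) for every g ∈ G, if f(g) ∈ qG' then g ∈ qG. -/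
/-- For an abelian group `G` and `n : ℕ`, the subgroup `nG = {n • g : g ∈ G}`
of `n`-th multiples. -/
def nMultiples (G : Type*) [AddCommGroup G] (n : ℕ) : AddSubgroup G :=
  AddMonoidHom.range (AddMonoidHom.mk' (fun g : G => n • g) (fun a b => smul_add n a b))

lemma mem_nMultiples_iff {G : Type*} [AddCommGroup G] (n : ℕ) (x : G) :
    x ∈ nMultiples G n ↔ ∃ g : G, n • g = x := by
  simp [nMultiples, AddMonoidHom.mem_range]

/-- If `f : G → G'` is an injective homomorphism of abelian groups, `p` and `q` are coprime
positive integers, and `p·a ∈ Im(f)` for all `a ∈ G'`, then the induced homomorphism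
`f_q : G/qG → G'/qG'` is an isomorphism; equivalently, every `a ∈ G'` can be written
`a = f(g) + q·b`, and `f(g) ∈ qG'` implies `g ∈ qG`. -/
theorem induced_hom_mod_q_bijective {G G' : Type*} [AddCommGroup G] [AddCommGroup G']
    (f : G →+ G') (hf : Function.Injective f)
    (p q : ℕ) (hp : 0 < p) (hq : 0 < q) (hpq : Nat.Coprime p q)
    (hdiv : ∀ a : G', p • a ∈ f.range)
    (hcomap : nMultiples G q ≤ (nMultiples G' q).comap f) :
    Function.Bijective
      (QuotientAddGroup.map (nMultiples G q) (nMultiples G' q) f hcomap) ∧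
    (∀ a : G', ∃ (g : G) (b : G'), a = f g + q • b) ∧
    (∀ g : G, f g ∈ nMultiples G' q → g ∈ nMultiples G q) := by
  set x : ℤ := Nat.gcdA p q with hx
  set y : ℤ := Nat.gcdB p q with hy
  have h1 : (1 : ℤ) = (p : ℤ) * x + (q : ℤ) * y := by
    have := Nat.gcd_eq_gcd_ab p q
    rwa [Nat.Coprime.gcd_eq_one hpq, Nat.cast_one] at this
  have surj : ∀ a : G', ∃ (g : G) (b : G'), a = f g + q • b := by
    intro a
    obtain ⟨g, hg⟩ := hdiv a
    refine ⟨x • g, y • a, ?_⟩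
    calc a = ((p : ℤ) * x + (q : ℤ) * y) • a := by rw [← h1, one_smul]
      _ = x • ((p : ℤ) • a) + (q : ℤ) • (y • a) := by
          rw [add_smul, mul_comm (p : ℤ) x, mul_smul, mul_smul]
      _ = f (x • g) + q • (y • a) := by
          rw [natCast_zsmul (y • a) q, natCast_zsmul a p, ← hg, ← map_zsmul]
  have inj : ∀ g : G, f g ∈ nMultiples G' q → g ∈ nMultiples G q := by
    intro g hgmem
    obtain ⟨b, hb⟩ := (mem_nMultiples_iff q (f g)).mp hgmem
    obtain ⟨h, hh⟩ := hdiv b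
    have e1 : f (p • g) = f (q • h) := by
      rw [map_nsmul, map_nsmul, hh, ← hb, smul_smul, smul_smul, Nat.mul_comm]
    have e2 : p • g = q • h := hf e1
    rw [mem_nMultiples_iff]
    refine ⟨x • h + y • g, ?_⟩
    have : g = ((p : ℤ) * x + (q : ℤ) * y) • g := by rw [← h1, one_smul]
    calc q • (x • h + y • g) = (q : ℤ) • (x • h + y • g) := (natCast_zsmul _ _).symm
      _ = x • ((q : ℤ) • h) + (q : ℤ) • (y • g) := by
          rw [smul_add, smul_comm (q : ℤ) x]
      _ = x • ((p : ℤ) • g) + (q : ℤ) • (y • g) := by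
          simp only [natCast_zsmul]; rw [e2]
      _ = ((p : ℤ) * x + (q : ℤ) * y) • g := by
          rw [add_smul, mul_comm (p : ℤ) x, mul_smul, mul_smul]
      _ = g := this.symm
  refine ⟨⟨?_, ?_⟩, surj, inj⟩
  · rw [injective_iff_map_eq_zero]
    intro z
    induction z using QuotientAddGroup.induction_on with
    | H g =>
      intro hz
      have : f g ∈ nMultiples G' q := by
        rwa [QuotientAddGroup.map_mk, QuotientAddGroup.eq_zero_iff] at hz
      rw [QuotientAddGroup.eq_zero_iff]
      exact inj g this
  · intro z
    induction z using QuotientAddGroup.induction_on with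
    | H a =>
      obtain ⟨g, b, hab⟩ := surj a
      refine ⟨QuotientAddGroup.mk g, ?_⟩
      rw [QuotientAddGroup.map_mk, QuotientAddGroup.eq]
      rw [mem_nMultiples_iff]
      exact ⟨b, by rw [hab]; abel⟩
end

section
/- Let p and q be coprime positive integers. Then A' ⊆ ℂ⁶ has exactly two irreducible components, namely A'_r and A'_c. Precisely: (i) A' = A'_r ∪ A'_c; (ii) the vanishing ideal of A'_r in the polynomial ring ℂ[x₁,…,x₆] is a prime ideal; (iii) the vanishing ideal of A'_c in ℂ[x₁,…,x₆] is a prime ideal; (iv) A'_r is not contained in A'_c and A'_c is not contained in A'_r. -/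
/-!
Both conditions defining `A'` are 2 × 2 minors of the matrix `[[q x₁, x₂, x₃], [p x₄, x₅, x₆]]`.
Where the first column is nonzero they force the third minor `x₂ x₆ − x₃ x₅` to vanish, so
`A' = A'_r ∪ A'_c`, and `A'_c` is the locus where this matrix has rank at most one, i.e. is a
column times a row. Hence `A'_r` and `A'_c` are images of polynomial maps `ℂᵐ → ℂ⁶`, and the
vanishing ideal of such an image is the kernel of the substitution homomorphism into a polynomial
ring, which is a domain.
-/

/-- `A' = {x ∈ ℂ⁶ : p·x₄·x₂ − q·x₁·x₅ = 0 and p·x₄·x₃ − q·x₁·x₆ = 0}`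
(coordinates `x₁,…,x₆` are `x 0, …, x 5`). -/
def setA' (p q : ℕ) : Set (Fin 6 → ℂ) :=
  {x | (p : ℂ) * x 3 * x 1 - (q : ℂ) * x 0 * x 4 = 0 ∧
       (p : ℂ) * x 3 * x 2 - (q : ℂ) * x 0 * x 5 = 0}

/-- `A'_r = {x ∈ ℂ⁶ : x₁ = 0 and x₄ = 0}`. -/
def setA'r : Set (Fin 6 → ℂ) := {x | x 0 = 0 ∧ x 3 = 0}

/-- `A'_c = {x ∈ ℂ⁶ : p·x₄·x₂ − q·x₁·x₅ = 0, p·x₄·x₃ − q·x₁·x₆ = 0, x₂·x₆ − x₃·x₅ = 0}`. -/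
def setA'c (p q : ℕ) : Set (Fin 6 → ℂ) :=
  {x | (p : ℂ) * x 3 * x 1 - (q : ℂ) * x 0 * x 4 = 0 ∧
       (p : ℂ) * x 3 * x 2 - (q : ℂ) * x 0 * x 5 = 0 ∧
       x 1 * x 5 - x 2 * x 4 = 0}

open MvPolynomial

theorem MvPolynomial.vanishingIdeal_range_aeval_eq_ker {K σ τ : Type*} [Field K] [Infinite K]
    (f : σ → MvPolynomial τ K) :
    vanishingIdeal K (Set.range fun y : τ → K => fun i => aeval y (f i)) =
      RingHom.ker (bind₁ f) := by
  ext φ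
  simp only [mem_vanishingIdeal_iff, Set.forall_mem_range, RingHom.mem_ker, ← aeval_bind₁]
  exact ⟨fun h => MvPolynomial.funext fun y => by simpa using h y,
    fun h y => by rw [h, map_zero]⟩

theorem MvPolynomial.isPrime_vanishingIdeal_range_aeval {K σ τ : Type*} [Field K] [Infinite K]
    (f : σ → MvPolynomial τ K) :
    (vanishingIdeal K (Set.range fun y : τ → K => fun i => aeval y (f i))).IsPrime := by
  rw [vanishingIdeal_range_aeval_eq_ker]
  exact RingHom.ker_isPrime _

theorem exists_smul_eq_of_mul_eq_mul {K ι : Type*} [Field K] (v w : ι → K)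
    (h : ∀ i j, v i * w j = v j * w i) : ∃ a b : K, ∃ u : ι → K, a • u = v ∧ b • u = w := by
  by_cases hv : v = 0
  · exact ⟨0, 1, w, by simp [hv], one_smul K w⟩
  obtain ⟨j, hj⟩ : ∃ j, v j ≠ 0 := Function.ne_iff.mp hv
  refine ⟨1, w j / v j, v, one_smul K v, funext fun i => ?_⟩
  rw [Pi.smul_apply, smul_eq_mul, div_mul_eq_mul_div, div_eq_iff hj]
  linear_combination h i j

theorem setA'_eq_union (p q : ℕ) (hp : 0 < p) (hq : 0 < q) :
    setA' p q = setA'r ∪ setA'c p q := by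
  apply subset_antisymm
  · rintro x ⟨h1, h2⟩
    by_cases hr : x ∈ setA'r
    · exact Or.inl hr
    refine Or.inr ⟨h1, h2, ?_⟩
    rcases not_and_or.mp hr with h0 | h3
    · have : (q : ℂ) * x 0 * (x 1 * x 5 - x 2 * x 4) = 0 := by
        linear_combination x 2 * h1 - x 1 * h2
      simpa [hq.ne', h0] using this
    · have : (p : ℂ) * x 3 * (x 1 * x 5 - x 2 * x 4) = 0 := by
        linear_combination x 5 * h1 - x 4 * h2
      simpa [hp.ne', h3] using this
  · rintro x (⟨h0, h3⟩ | ⟨h1, h2, -⟩)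
    · constructor <;> simp [h0, h3]
    · exact ⟨h1, h2⟩

theorem setA'r_eq_range :
    setA'r = Set.range fun y : Fin 6 → ℂ => fun i => aeval y
      ((![0, X 1, X 2, 0, X 4, X 5] : Fin 6 → MvPolynomial (Fin 6) ℂ) i) := by
  ext x
  constructor
  · rintro ⟨h0, h3⟩
    refine ⟨x, funext fun i => ?_⟩
    fin_cases i <;> simp [h0, h3]
  · rintro ⟨y, rfl⟩
    constructor <;> simp

theorem setA'c_eq_range (p q : ℕ) (hp : 0 < p) (hq : 0 < q) :
    setA'c p q = Set.range fun y : Fin 5 → ℂ => fun i => aeval y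
      (![C (q : ℂ)⁻¹ * X 0 * X 2, X 0 * X 3, X 0 * X 4,
        C (p : ℂ)⁻¹ * X 1 * X 2, X 1 * X 3, X 1 * X 4] i) := by
  have hp' : (p : ℂ) ≠ 0 := by exact_mod_cast hp.ne'
  have hq' : (q : ℂ) ≠ 0 := by exact_mod_cast hq.ne'
  ext x
  constructor
  · rintro ⟨h1, h2, h3⟩
    have hminors : ∀ i j, ![q * x 0, x 1, x 2] i * ![p * x 3, x 4, x 5] j =
        ![q * x 0, x 1, x 2] j * ![p * x 3, x 4, x 5] i := by
      intro i j
      fin_cases i <;> fin_cases j <;>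
        simp only [Fin.isValue, Fin.zero_eta, Fin.mk_one, Fin.reduceFinMk, Matrix.cons_val_zero,
          Matrix.cons_val_one, Matrix.cons_val] <;> grind
    obtain ⟨a, b, u, hv, hw⟩ := exists_smul_eq_of_mul_eq_mul _ _ hminors
    refine ⟨![a, b, u 0, u 1, u 2], funext fun i => ?_⟩
    obtain ⟨hv0, hv1, hv2⟩ : a * u 0 = q * x 0 ∧ a * u 1 = x 1 ∧ a * u 2 = x 2 :=
      ⟨congrFun hv 0, congrFun hv 1, congrFun hv 2⟩
    obtain ⟨hw0, hw1, hw2⟩ : b * u 0 = p * x 3 ∧ b * u 1 = x 4 ∧ b * u 2 = x 5 :=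
      ⟨congrFun hw 0, congrFun hw 1, congrFun hw 2⟩
    fin_cases i <;> simp only [Fin.isValue, Fin.zero_eta, Fin.mk_one, Fin.reduceFinMk,
      Matrix.cons_val_zero, Matrix.cons_val_one, Matrix.cons_val, aeval_eq_eval, map_mul, eval_C, eval_X]
    · rw [mul_assoc, hv0, inv_mul_cancel_left₀ hq']
    · exact hv1
    · exact hv2
    · rw [mul_assoc, hw0, inv_mul_cancel_left₀ hp']
    · exact hw1
    · exact hw2
  · rintro ⟨y, rfl⟩
    refine ⟨?_, ?_, ?_⟩ <;>
      simp only [Fin.isValue, Matrix.cons_val_zero, Matrix.cons_val_one, Matrix.cons_val, aeval_eq_eval,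
        map_mul, eval_C, eval_X] <;>
      field_simp <;> ring

theorem not_setA'r_subset_setA'c (p q : ℕ) : ¬ setA'r ⊆ setA'c p q := by
  intro h
  have hx : (![0, 1, 0, 0, 0, 1] : Fin 6 → ℂ) ∈ setA'r := ⟨rfl, rfl⟩
  simpa using (h hx).2.2

theorem not_setA'c_subset_setA'r (p q : ℕ) : ¬ setA'c p q ⊆ setA'r := by
  intro h
  have hx : (![1, 0, 0, 0, 0, 0] : Fin 6 → ℂ) ∈ setA'c p q := by
    refine ⟨?_, ?_, ?_⟩ <;> simp
  simpa using (h hx).1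

theorem setA'_irreducible_components_general (p q : ℕ) (hp : 0 < p) (hq : 0 < q) :
    setA' p q = setA'r ∪ setA'c p q ∧
    (MvPolynomial.vanishingIdeal ℂ setA'r).IsPrime ∧
    (MvPolynomial.vanishingIdeal ℂ (setA'c p q)).IsPrime ∧
    ¬ setA'r ⊆ setA'c p q ∧ ¬ setA'c p q ⊆ setA'r := by
  refine ⟨setA'_eq_union p q hp hq, ?_, ?_, not_setA'r_subset_setA'c p q,
    not_setA'c_subset_setA'r p q⟩
  · rw [setA'r_eq_range]
    exact isPrime_vanishingIdeal_range_aeval _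
  · rw [setA'c_eq_range p q hp hq]
    exact isPrime_vanishingIdeal_range_aeval _

/-- For coprime positive integers `p` and `q`, `A'` has exactly the two irreducible components
`A'_r` and `A'_c`: it is their union, the vanishing ideal of each is prime, and neither is
contained in the other. -/
theorem setA'_irreducible_components (p q : ℕ) (hp : 0 < p) (hq : 0 < q)
    (hpq : Nat.Coprime p q) :
    setA' p q = setA'r ∪ setA'c p q ∧
    (MvPolynomial.vanishingIdeal ℂ setA'r).IsPrime ∧
    (MvPolynomial.vanishingIdeal ℂ (setA'c p q)).IsPrime ∧
    ¬ setA'r ⊆ setA'c p q ∧ ¬ setA'c p q ⊆ setA'r :=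
  setA'_irreducible_components_general p q hp hq
end

section
/- Let φ : ℂⁿ → ℂᵐ be a ℂ-linear map, let A ⊆ ℂᵐ be an algebraic set, and let A₁, …, A_k be algebraic subsets of ℂᵐ, each contained in the image of φ, such that A ∩ Im(φ) = A₁ ∪ ⋯ ∪ A_k. Then the following two conditions are equivalent: (i) for every i the vanishing ideal of Aᵢ is a prime ideal, and for all i ≠ j, Aᵢ is not contained in Aⱼ; (ii) for every i the vanishing ideal of φ⁻¹(Aᵢ) is a prime ideal, and for all i ≠ j, φ⁻¹(Aᵢ) is not contained in φ⁻¹(Aⱼ). (In other words, A ∩ Im(φ) = A₁ ∪ ⋯ ∪ A_k is the decomposition of A ∩ Im(φ) into irreducible components if and only if φ⁻¹(A) = φ⁻¹(A₁) ∪ ⋯ ∪ φ⁻¹(A_k) is the decomposition of φ⁻¹(A) into irreducible components.) -/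
open MvPolynomial

/-- A subset of `ℂᵏ` is an algebraic (Zariski-closed) set if it is the zero locus of its
vanishing ideal. -/
def IsAlgebraicSet {k : ℕ} (S : Set (Fin k → ℂ)) : Prop :=
  S = zeroLocus ℂ (vanishingIdeal ℂ S)

/-!
Vanishing ideals pull back along substitution: `I(L '' V)` is the preimage of `I(V)` under
`p ↦ p ∘ L`, so primality passes to linear images, in particular from `φ⁻¹(S)` to
`S = φ(φ⁻¹(S))`. Conversely, for a linear `ψ` inverting `φ` on its range,
`φ⁻¹(S) = ψ(S) + ker φ`; a linear subspace is irreducible over an infinite field, and the sum of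
two irreducible sets is irreducible by the argument for products of irreducible varieties.
-/

open Pointwise

theorem LinearMap.exists_preimage_eq_image_add_ker {K V W : Type*} [DivisionRing K]
    [AddCommGroup V] [Module K V] [AddCommGroup W] [Module K W] (φ : V →ₗ[K] W) :
    ∃ ψ : W →ₗ[K] V, ∀ S ⊆ Set.range φ, φ ⁻¹' S = ψ '' S + (ker φ : Set V) := by
  obtain ⟨ρ, hρ⟩ := φ.rangeRestrict.exists_rightInverse_of_surjective φ.range_rangeRestrict
  obtain ⟨ψ, hψ⟩ := LinearMap.exists_extend ρ
  have hφψ : ∀ x, φ (ψ (φ x)) = φ x := fun x => by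
    have := congr($hρ ⟨φ x, x, rfl⟩)
    rw [← hψ] at this
    exact congr_arg Subtype.val this
  refine ⟨ψ, fun S hS => Set.ext fun x => ⟨fun hx => ?_, ?_⟩⟩
  · exact ⟨ψ (φ x), ⟨φ x, hx, rfl⟩, x - ψ (φ x), by simp [hφψ], add_sub_cancel _ _⟩
  · rintro ⟨_, ⟨y, hy, rfl⟩, k, hk, rfl⟩
    obtain ⟨x, rfl⟩ := hS hy
    simpa [LinearMap.mem_ker.mp hk, hφψ] using hy

namespace MvPolynomial

variable {K : Type*} [Field K] {ι κ : Type*}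

theorem vanishingIdeal_ne_top_iff {V : Set (ι → K)} : vanishingIdeal K V ≠ ⊤ ↔ V.Nonempty := by
  refine ⟨fun h => Set.nonempty_iff_ne_empty.mpr ?_, fun ⟨x, hx⟩ h => ?_⟩
  · rintro rfl
    exact h vanishingIdeal_empty
  · simpa using (h ▸ Submodule.mem_top : (1 : MvPolynomial ι K) ∈ vanishingIdeal K V) x hx

theorem vanishingIdeal_univ [Infinite K] : vanishingIdeal K (Set.univ : Set (ι → K)) = ⊥ :=
  eq_bot_iff.mpr fun p hp => funext fun x => by simpa using hp x (Set.mem_univ x)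

variable [Fintype ι] [DecidableEq ι]

noncomputable def affineComp (L : (ι → K) →ₗ[K] (κ → K)) (c : κ → K) :
    MvPolynomial κ K →ₐ[K] MvPolynomial ι K :=
  bind₁ fun j => (LinearMap.toMatrix' L).toMvPolynomial j + C (c j)

@[simp]
theorem eval_affineComp (L : (ι → K) →ₗ[K] (κ → K)) (c : κ → K) (x : ι → K)
    (p : MvPolynomial κ K) : eval x (affineComp L c p) = eval (L x + c) p := by
  rw [affineComp, hom_bind₁, show (eval x).comp C = RingHom.id K from RingHom.ext eval_C]
  simp [Matrix.toMvPolynomial_eval_eq_apply, Pi.add_def, eval₂_id]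

theorem vanishingIdeal_image_eq_comap (L : (ι → K) →ₗ[K] (κ → K)) (V : Set (ι → K)) :
    vanishingIdeal K (L '' V) = (vanishingIdeal K V).comap (affineComp L 0) := by
  ext p
  simp

theorem isPrime_vanishingIdeal_image {V : Set (ι → K)} (hV : (vanishingIdeal K V).IsPrime)
    (L : (ι → K) →ₗ[K] (κ → K)) : (vanishingIdeal K (L '' V)).IsPrime := by
  rw [vanishingIdeal_image_eq_comap]
  exact Ideal.comap_isPrime _ _

theorem isPrime_vanishingIdeal_submodule [Infinite K] (W : Submodule K (ι → K)) :
    (vanishingIdeal K (W : Set (ι → K))).IsPrime := by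
  obtain ⟨g, hg⟩ := W.subtype.exists_leftInverse_of_injective W.ker_subtype
  have hg_surj : Function.Surjective g :=
    Function.LeftInverse.surjective (g := W.subtype) (LinearMap.congr_fun hg)
  have hW : (W : Set (ι → K)) = (W.subtype ∘ₗ g) '' Set.univ := by
    rw [Set.image_univ, LinearMap.coe_comp, Set.range_comp, hg_surj.range_eq, Set.image_univ,
      Submodule.coe_subtype, Subtype.range_coe]
  rw [hW]
  refine isPrime_vanishingIdeal_image ?_ _
  rw [vanishingIdeal_univ]
  exact Ideal.isPrime_bot

theorem isPrime_vanishingIdeal_add {V W : Set (ι → K)} (hV : (vanishingIdeal K V).IsPrime)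
    (hW : (vanishingIdeal K W).IsPrime) : (vanishingIdeal K (V + W)).IsPrime := by
  let shift (c : ι → K) : MvPolynomial ι K →ₐ[K] MvPolynomial ι K := affineComp LinearMap.id c
  have mem_shift {U : Set (ι → K)} {c : ι → K} {p : MvPolynomial ι K} :
      shift c p ∈ vanishingIdeal K U ↔ ∀ u ∈ U, aeval (u + c) p = 0 := by
    simp [shift]
  refine ⟨vanishingIdeal_ne_top_iff.mpr ((vanishingIdeal_ne_top_iff.mp hV.ne_top).add
    (vanishingIdeal_ne_top_iff.mp hW.ne_top)), fun {f g} hfg => ?_⟩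
  by_contra! hfg'
  simp only [mem_vanishingIdeal_iff, not_forall, exists_prop] at hfg'
  obtain ⟨⟨_, ⟨v₁, hv₁, w₁, hw₁, rfl⟩, hf⟩, ⟨_, ⟨v₂, hv₂, w₂, hw₂, rfl⟩, hg⟩⟩ := hfg'
  have h_split : ∀ w ∈ W, shift w f ∈ vanishingIdeal K V ∨ shift w g ∈ vanishingIdeal K V :=
    fun w hw => hV.mem_or_mem <| by
      rw [← map_mul, mem_shift]
      exact fun v hv => hfg _ (Set.add_mem_add hv hw)
  -- primality of `I(W)` yields one `w` at which neither alternative of `h_split` holds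
  have h_prod : shift v₁ f * shift v₂ g ∉ vanishingIdeal K W := by
    refine fun h => (hW.mem_or_mem h).elim (fun h => hf ?_) (fun h => hg ?_)
    · simpa [add_comm] using mem_shift.mp h w₁ hw₁
    · simpa [add_comm] using mem_shift.mp h w₂ hw₂
  obtain ⟨w, hw, hfg_w⟩ : ∃ w ∈ W, aeval (w + v₁) f * aeval (w + v₂) g ≠ 0 := by
    simpa [shift] using h_prod
  rcases h_split w hw with h | h
  · exact left_ne_zero_of_mul hfg_w (by simpa [add_comm] using mem_shift.mp h v₁ hv₁)
  · exact right_ne_zero_of_mul hfg_w (by simpa [add_comm] using mem_shift.mp h v₂ hv₂)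

theorem isPrime_vanishingIdeal_preimage_iff [Infinite K] [Fintype κ] [DecidableEq κ]
    (φ : (ι → K) →ₗ[K] (κ → K)) {S : Set (κ → K)} (hS : S ⊆ Set.range φ) :
    (vanishingIdeal K (φ ⁻¹' S)).IsPrime ↔ (vanishingIdeal K S).IsPrime := by
  refine ⟨fun h => ?_, fun h => ?_⟩
  · rw [← Set.image_preimage_eq_of_subset hS]
    exact isPrime_vanishingIdeal_image h φ
  · obtain ⟨ψ, hψ⟩ := φ.exists_preimage_eq_image_add_ker
    rw [hψ S hS]
    exact isPrime_vanishingIdeal_add (isPrime_vanishingIdeal_image h ψ)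
      (isPrime_vanishingIdeal_submodule _)

end MvPolynomial

theorem linear_preimage_irreducible_components_general
    (n m k : ℕ) (φ : (Fin n → ℂ) →ₗ[ℂ] (Fin m → ℂ))
    (Ai : Fin k → Set (Fin m → ℂ))
    (hsub : ∀ i, Ai i ⊆ Set.range φ) :
    ((∀ i, (vanishingIdeal ℂ (Ai i)).IsPrime) ∧
        ∀ i j, i ≠ j → ¬ Ai i ⊆ Ai j) ↔
      ((∀ i, (vanishingIdeal ℂ (φ ⁻¹' (Ai i))).IsPrime) ∧
        ∀ i j, i ≠ j → ¬ φ ⁻¹' (Ai i) ⊆ φ ⁻¹' (Ai j)) := by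
  simp only [isPrime_vanishingIdeal_preimage_iff φ (hsub _),
    Set.preimage_subset_preimage_iff (hsub _)]

/-- Let `φ : ℂⁿ → ℂᵐ` be a linear map, `A ⊆ ℂᵐ` an algebraic set and `A₁, …, A_k` algebraic
sets contained in `Im(φ)` with `A ∩ Im(φ) = A₁ ∪ ⋯ ∪ A_k`. Then the `Aᵢ` are the irreducible
components of `A ∩ Im(φ)` (each vanishing ideal prime, no mutual containments) if and only if
the `φ⁻¹(Aᵢ)` are the irreducible components of `φ⁻¹(A)` in the same sense. -/
theorem linear_preimage_irreducible_components
    (n m k : ℕ) (φ : (Fin n → ℂ) →ₗ[ℂ] (Fin m → ℂ))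
    (A : Set (Fin m → ℂ)) (hA : IsAlgebraicSet A)
    (Ai : Fin k → Set (Fin m → ℂ))
    (hAi : ∀ i, IsAlgebraicSet (Ai i))
    (hsub : ∀ i, Ai i ⊆ Set.range φ)
    (hdecomp : A ∩ Set.range φ = ⋃ i, Ai i) :
    ((∀ i, (vanishingIdeal ℂ (Ai i)).IsPrime) ∧
        ∀ i j, i ≠ j → ¬ Ai i ⊆ Ai j) ↔
      ((∀ i, (vanishingIdeal ℂ (φ ⁻¹' (Ai i))).IsPrime) ∧
        ∀ i j, i ≠ j → ¬ φ ⁻¹' (Ai i) ⊆ φ ⁻¹' (Ai j)) :=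
  linear_preimage_irreducible_components_general n m k φ Ai hsub
end
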